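/- arXiv:1812.09675 — 2 statements merged into one kernel-verified Lean document; each statement's English description precedes it below -/
import Mathlib

section
/- Fix α, β ∈ ℝ with α² + 4β ≥ 0 and let g(x) = √(-x² + αx + β) for r₁ ≤ x ≤ r₂ and g(x) = 0 otherwise, where r₁ ≤ r₂ are the roots of -x² + αx + β. Then for all x₁, x₂ ∈ ℝ, |g(x₁) - g(x₂)| ≤ √(r₂ - r₁) · √|x₁ - x₂|. -/
lemma sqrt_diff_le (a b : ℝ) (hb : 0 ≤ b) :
    Real.sqrt a - Real.sqrt b ≤ Real.sqrt |a - b| := by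
  rcases le_or_gt a b with h | h
  · have h1 : Real.sqrt a ≤ Real.sqrt b := Real.sqrt_le_sqrt h
    have := Real.sqrt_nonneg |a - b|
    linarith
  · rw [abs_of_pos (by linarith : (0:ℝ) < a - b)]
    have e1 : Real.sqrt (a - b) ^ 2 = a - b := Real.sq_sqrt (by linarith)
    have e2 : Real.sqrt b ^ 2 = b := Real.sq_sqrt hb
    have hmul : 0 ≤ Real.sqrt (a - b) * Real.sqrt b :=
      mul_nonneg (Real.sqrt_nonneg _) (Real.sqrt_nonneg _)
    have h2 : a ≤ (Real.sqrt (a - b) + Real.sqrt b) ^ 2 := by nlinarith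
    have h3 : Real.sqrt a ≤ Real.sqrt (a - b) + Real.sqrt b := by
      calc Real.sqrt a ≤ Real.sqrt ((Real.sqrt (a - b) + Real.sqrt b) ^ 2) :=
            Real.sqrt_le_sqrt h2
        _ = Real.sqrt (a - b) + Real.sqrt b :=
            Real.sqrt_sq (by positivity)
    linarith

theorem diffusion_holder (α β : ℝ) (hdisc : α ^ 2 + 4 * β ≥ 0)
    (r₁ r₂ : ℝ) (hr₁ : r₁ = (α - Real.sqrt (α ^ 2 + 4 * β)) / 2)
    (hr₂ : r₂ = (α + Real.sqrt (α ^ 2 + 4 * β)) / 2)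
    (g : ℝ → ℝ)
    (hg : ∀ x : ℝ, g x = if r₁ ≤ x ∧ x ≤ r₂ then Real.sqrt (-x ^ 2 + α * x + β) else 0) :
    ∀ x₁ x₂ : ℝ, |g x₁ - g x₂| ≤ Real.sqrt (r₂ - r₁) * Real.sqrt |x₁ - x₂| := by
  have hs : Real.sqrt (α ^ 2 + 4 * β) ^ 2 = α ^ 2 + 4 * β := Real.sq_sqrt hdisc
  have hr : r₁ ≤ r₂ := by
    rw [hr₁, hr₂]
    have := Real.sqrt_nonneg (α ^ 2 + 4 * β)
    linarith
  have hf : ∀ x : ℝ, -x ^ 2 + α * x + β = (x - r₁) * (r₂ - x) := by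
    intro x; rw [hr₁, hr₂]; nlinarith [hs]
  have main : ∀ y₁ y₂ : ℝ, g y₁ - g y₂ ≤ Real.sqrt ((r₂ - r₁) * |y₁ - y₂|) := by
    intro y₁ y₂
    rw [hg y₁, hg y₂]
    by_cases h₁ : r₁ ≤ y₁ ∧ y₁ ≤ r₂
    · rw [if_pos h₁]
      by_cases h₂ : r₁ ≤ y₂ ∧ y₂ ≤ r₂
      · rw [if_pos h₂]
        have hb : 0 ≤ -y₂ ^ 2 + α * y₂ + β := by
          rw [hf]
          exact mul_nonneg (by linarith [h₂.1]) (by linarith [h₂.2])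
        refine le_trans (sqrt_diff_le _ _ hb) (Real.sqrt_le_sqrt ?_)
        rw [hf, hf]
        have e : (y₁ - r₁) * (r₂ - y₁) - (y₂ - r₁) * (r₂ - y₂)
            = (y₁ - y₂) * ((r₁ + r₂) - (y₁ + y₂)) := by ring
        rw [e, abs_mul]
        have h3 : |(r₁ + r₂) - (y₁ + y₂)| ≤ r₂ - r₁ :=
          abs_le.mpr ⟨by linarith [h₁.2, h₂.2], by linarith [h₁.1, h₂.1]⟩
        calc |y₁ - y₂| * |(r₁ + r₂) - (y₁ + y₂)| ≤ |y₁ - y₂| * (r₂ - r₁) :=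
              mul_le_mul_of_nonneg_left h3 (abs_nonneg _)
          _ = (r₂ - r₁) * |y₁ - y₂| := mul_comm _ _
      · rw [if_neg h₂, sub_zero]
        refine Real.sqrt_le_sqrt ?_
        rw [hf]
        rcases not_and_or.mp h₂ with h | h
        · push_neg at h
          nlinarith [le_abs_self (y₁ - y₂), abs_nonneg (y₁ - y₂), h₁.1, h₁.2]
        · push_neg at h
          nlinarith [neg_abs_le (y₁ - y₂), abs_nonneg (y₁ - y₂), h₁.1, h₁.2]
    · rw [if_neg h₁]
      have h2 : (0:ℝ) ≤ if r₁ ≤ y₂ ∧ y₂ ≤ r₂ then Real.sqrt (-y₂ ^ 2 + α * y₂ + β) else 0 := by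
        split
        · exact Real.sqrt_nonneg _
        · exact le_rfl
      have := Real.sqrt_nonneg ((r₂ - r₁) * |y₁ - y₂|)
      linarith
  intro x₁ x₂
  rw [← Real.sqrt_mul (by linarith : (0:ℝ) ≤ r₂ - r₁)]
  refine abs_le.mpr ⟨?_, main x₁ x₂⟩
  have h := main x₂ x₁
  rw [abs_sub_comm x₂ x₁] at h
  linarith
end

section
/- Let a = λSI/N + (μ+γ)I + 2μS, b = −λSI/N − γI, c = λSI/N + (μ+γ)I with S, I ≥ 0, N = S + I > 0, and λ, μ, γ ≥ 0. Then the 2×2 symmetric matrix V = [[a, b], [b, c]] is positive semidefinite, i.e. a ≥ 0, c ≥ 0 and ac − b² ≥ 0. -/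
theorem binary_quadratic_nonneg {R : Type*} [Field R] [LinearOrder R] [IsStrictOrderedRing R]
    {a b c : R} (ha : 0 ≤ a) (hc : 0 ≤ c) (hb : b ^ 2 ≤ a * c) (x y : R) :
    0 ≤ a * x ^ 2 + 2 * b * x * y + c * y ^ 2 := by
  rcases (add_nonneg ha hc).eq_or_lt with hac | hac
  · obtain ⟨rfl, rfl⟩ : a = 0 ∧ c = 0 := ⟨by linarith, by linarith⟩
    obtain rfl : b = 0 := by nlinarith
    simp
  · refine nonneg_of_mul_nonneg_right ?_ hac
    have hdisc : 0 ≤ (a * c - b ^ 2) * (x ^ 2 + y ^ 2) := by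
      apply mul_nonneg <;> [linarith; positivity]
    calc (0 : R)
        ≤ (a * x + b * y) ^ 2 + (b * x + c * y) ^ 2 + (a * c - b ^ 2) * (x ^ 2 + y ^ 2) := by
          positivity
      _ = (a + c) * (a * x ^ 2 + 2 * b * x * y + c * y ^ 2) := by ring

theorem Matrix.posSemidef_fin_two {R : Type*} [Field R] [LinearOrder R] [IsStrictOrderedRing R]
    [StarRing R] [TrivialStar R] {a b c : R} (ha : 0 ≤ a) (hc : 0 ≤ c) (hb : b ^ 2 ≤ a * c) :
    (!![a, b; b, c]).PosSemidef := by
  refine .of_dotProduct_mulVec_nonneg ?_ fun x => ?_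
  · ext i j
    fin_cases i <;> fin_cases j <;> simp
  · convert binary_quadratic_nonneg ha hc hb (x 0) (x 1) using 1
    simp only [dotProduct, Pi.star_apply, star_trivial, mulVec, of_apply, cons_val',
      cons_val_fin_one, Fin.sum_univ_two, cons_val_zero, cons_val_one]
    ring

theorem sis_covariance_posSemidef_general (S I N lam μ γ a b c : ℝ)
    (hS : 0 ≤ S) (hI : 0 ≤ I) (hN : N = S + I)
    (hlam : 0 ≤ lam) (hμ : 0 ≤ μ) (hγ : 0 ≤ γ)
    (ha : a = lam * S * I / N + (μ + γ) * I + 2 * μ * S)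
    (hb : b = -(lam * S * I / N) - γ * I)
    (hc : c = lam * S * I / N + (μ + γ) * I) :
    Matrix.PosSemidef !![a, b; b, c] ∧ 0 ≤ a ∧ 0 ≤ c ∧ 0 ≤ a * c - b ^ 2 := by
  have hp : 0 ≤ lam * S * I / N := by rw [hN]; positivity
  set p := lam * S * I / N
  have ha' : 0 ≤ a := by rw [ha]; positivity
  have hc' : 0 ≤ c := by rw [hc]; positivity
  have hdet_eq : a * c - b ^ 2 =
      μ * I * (2 * (p + γ * I) + μ * I) + 2 * μ * S * (p + (μ + γ) * I) := by
    rw [ha, hb, hc]; ring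
  have hdet_nonneg : 0 ≤ a * c - b ^ 2 := by rw [hdet_eq]; positivity
  exact ⟨Matrix.posSemidef_fin_two ha' hc' (by linarith), ha', hc', hdet_nonneg⟩

theorem sis_covariance_posSemidef (S I N lam μ γ a b c : ℝ)
    (hS : 0 ≤ S) (hI : 0 ≤ I) (hN : N = S + I) (hNpos : 0 < N)
    (hlam : 0 ≤ lam) (hμ : 0 ≤ μ) (hγ : 0 ≤ γ)
    (ha : a = lam * S * I / N + (μ + γ) * I + 2 * μ * S)
    (hb : b = -(lam * S * I / N) - γ * I)
    (hc : c = lam * S * I / N + (μ + γ) * I) :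
    Matrix.PosSemidef !![a, b; b, c] ∧ 0 ≤ a ∧ 0 ≤ c ∧ 0 ≤ a * c - b ^ 2 :=
  sis_covariance_posSemidef_general S I N lam μ γ a b c hS hI hN hlam hμ hγ ha hb hc
end
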